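/- Vaaler's trigonometric polynomial V_D of degree D satisfies |V_D(x) − s(x)| ≤ Δ_{D+1}(x)/(2D+2) for all x, where s is the sawtooth function and Δ_K is the Fejér kernel. Deduce that if ‖x‖ ≥ 2η and η ≤ 1/4, then the Selberg majorant satisfies |S⁺_{D,η}(x)| ≤ 1/(η²D²). -/

import Mathlib

open Finset

/-- Distance to the nearest integer. -/
noncomputable def nint (x : ℝ) : ℝ := |x - round x|

open Classical in
/-- The sawtooth function: `{x} - 1/2` for `x ∉ ℤ` and `0` for `x ∈ ℤ`. -/
noncomputable def saw (x : ℝ) : ℝ := if ∃ k : ℤ, x = (k : ℝ) then 0 else Int.fract x - 1/2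

/-- The Fejér kernel `Δ_K(x) = ∑_{|k| ≤ K} (1 - |k|/K) e(kx)` (real-valued). -/
noncomputable def fejer (K : ℕ) (x : ℝ) : ℝ :=
  ∑ k ∈ Finset.Icc (-(K : ℤ)) (K : ℤ), (1 - |(k : ℝ)|/K) * Real.cos (2 * Real.pi * k * x)

lemma nint_le (x : ℝ) (m : ℤ) : nint x ≤ |x - m| := by
  rcases eq_or_ne m (round x) with h | h
  · simp [nint, h]
  · have h1 : (1:ℝ) ≤ |((round x : ℤ) : ℝ) - (m : ℝ)| := by
      have h' : 1 ≤ |round x - m| := Int.one_le_abs (sub_ne_zero.mpr (Ne.symm h))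
      exact_mod_cast h'
    have h2 : |x - round x| ≤ 1/2 := abs_sub_round x
    have h3 : |((round x : ℤ) : ℝ) - (m:ℝ)| ≤ |(round x : ℝ) - x| + |x - m| := abs_sub_le _ _ _
    have h4 : |(round x : ℝ) - x| = |x - round x| := abs_sub_comm _ _
    unfold nint
    linarith

lemma nint_shift (x c : ℝ) : nint x ≤ nint (x + c) + |c| := by
  have h1 : nint x ≤ |x - round (x + c)| := nint_le x (round (x + c))
  have h2 : |x - (round (x + c) : ℝ)| ≤ |x + c - round (x + c)| + |c| := by
    have h := abs_add_le (x + c - round (x + c)) (-c)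
    rw [abs_neg] at h
    calc |x - (round (x + c) : ℝ)| = |(x + c - round (x + c)) + -c| := by ring_nf
    _ ≤ _ := h
  unfold nint at *
  linarith

lemma nint_neg (x : ℝ) : nint (-x) = nint x := by
  have h1 : nint (-x) ≤ |(-x) - ((-(round x) : ℤ) : ℝ)| := nint_le _ _
  have h2 : nint x ≤ |x - ((-(round (-x)) : ℤ) : ℝ)| := nint_le _ _
  push_cast at h1 h2
  have e1 : |(-x) - (-(round x : ℝ))| = |x - round x| := by
    rw [show (-x) - (-(round x:ℝ)) = -(x - round x) by ring, abs_neg]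
  have e2 : |x - (-(round (-x) : ℝ))| = |(-x) - round (-x)| := by
    rw [show x - (-(round (-x):ℝ)) = -((-x) - round (-x)) by ring, abs_neg]
  unfold nint at *
  rw [e1] at h1
  rw [e2] at h2
  linarith

lemma dirich (t : ℝ) : ∀ K : ℕ,
    (∑ k ∈ Finset.Icc (-(K:ℤ)) (K:ℤ), Real.cos (2*Real.pi*k*t)) * (1 - Real.cos (2*Real.pi*t))
      = Real.cos (2*Real.pi*K*t) - Real.cos (2*Real.pi*(K+1)*t)
  | 0 => by norm_num
  | (K+1) => by
    have hins : Finset.Icc (-((K:ℤ)+1)) ((K:ℤ)+1)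
        = insert (-((K:ℤ)+1)) (insert ((K:ℤ)+1) (Finset.Icc (-(K:ℤ)) (K:ℤ))) := by
      ext k; simp [Finset.mem_Icc, Finset.mem_insert]; omega
    have h1 : (-((K:ℤ)+1)) ∉ insert ((K:ℤ)+1) (Finset.Icc (-(K:ℤ)) (K:ℤ)) := by
      simp [Finset.mem_Icc]; omega
    have h2 : ((K:ℤ)+1) ∉ Finset.Icc (-(K:ℤ)) (K:ℤ) := by
      simp [Finset.mem_Icc]
    have IH := dirich t K
    have hneg : Real.cos (2*Real.pi*(-((K:ℝ)+1))*t) = Real.cos (2*Real.pi*((K:ℝ)+1)*t) := by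
      rw [show 2*Real.pi*(-((K:ℝ)+1))*t = -(2*Real.pi*((K:ℝ)+1)*t) by ring, Real.cos_neg]
    have pts : Real.cos (2*Real.pi*((K:ℝ)+1)*t) * Real.cos (2*Real.pi*t) * 2
        = Real.cos (2*Real.pi*((K:ℝ)+1+1)*t) + Real.cos (2*Real.pi*(K:ℝ)*t) := by
      rw [show 2*Real.pi*((K:ℝ)+1+1)*t = 2*Real.pi*((K:ℝ)+1)*t + 2*Real.pi*t by ring,
          show 2*Real.pi*(K:ℝ)*t = 2*Real.pi*((K:ℝ)+1)*t - 2*Real.pi*t by ring,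
          Real.cos_add, Real.cos_sub]
      ring
    push_cast [hins, Finset.sum_insert h1, Finset.sum_insert h2]
    push_cast at IH
    rw [hneg]
    linear_combination IH - pts

lemma fejer_core (t : ℝ) : ∀ K : ℕ,
    (∑ k ∈ Finset.Icc (-(K:ℤ)) (K:ℤ), ((K:ℝ) - |(k:ℝ)|) * Real.cos (2*Real.pi*k*t))
      * (1 - Real.cos (2*Real.pi*t)) = 1 - Real.cos (2*Real.pi*K*t)
  | 0 => by norm_num
  | (K+1) => by
    have hins : Finset.Icc (-((K:ℤ)+1)) ((K:ℤ)+1)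
        = insert (-((K:ℤ)+1)) (insert ((K:ℤ)+1) (Finset.Icc (-(K:ℤ)) (K:ℤ))) := by
      ext k; simp [Finset.mem_Icc, Finset.mem_insert]; omega
    have h1 : (-((K:ℤ)+1)) ∉ insert ((K:ℤ)+1) (Finset.Icc (-(K:ℤ)) (K:ℤ)) := by
      simp [Finset.mem_Icc]; omega
    have h2 : ((K:ℤ)+1) ∉ Finset.Icc (-(K:ℤ)) (K:ℤ) := by
      simp [Finset.mem_Icc]
    have IH := fejer_core t K
    have ID := dirich t K
    have hsplit : ∑ k ∈ Finset.Icc (-(K:ℤ)) (K:ℤ),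
        (((K:ℝ)+1) - |(k:ℝ)|) * Real.cos (2*Real.pi*k*t)
        = (∑ k ∈ Finset.Icc (-(K:ℤ)) (K:ℤ), ((K:ℝ) - |(k:ℝ)|) * Real.cos (2*Real.pi*k*t))
          + ∑ k ∈ Finset.Icc (-(K:ℤ)) (K:ℤ), Real.cos (2*Real.pi*k*t) := by
      rw [← Finset.sum_add_distrib]
      exact Finset.sum_congr rfl fun k _ => by ring
    push_cast [hins, Finset.sum_insert h1, Finset.sum_insert h2]
    push_cast at IH ID hsplit
    rw [hsplit]
    have habs1 : |(-((K:ℝ)+1))| = (K:ℝ)+1 := by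
      rw [abs_neg, abs_of_nonneg]; positivity
    have habs2 : |((K:ℝ)+1)| = (K:ℝ)+1 := by
      rw [abs_of_nonneg]; positivity
    rw [habs1, habs2]
    linear_combination IH + ID

lemma fejer_mul (K : ℕ) (hK : 0 < K) (t : ℝ) :
    (K:ℝ) * fejer K t * (1 - Real.cos (2*Real.pi*t)) = 1 - Real.cos (2*Real.pi*K*t) := by
  have hK0 : (K:ℝ) ≠ 0 := by positivity
  have : (K:ℝ) * fejer K t
      = ∑ k ∈ Finset.Icc (-(K:ℤ)) (K:ℤ), ((K:ℝ) - |(k:ℝ)|) * Real.cos (2*Real.pi*k*t) := by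
    rw [fejer, Finset.mul_sum]
    exact Finset.sum_congr rfl fun k _ => by field_simp
  rw [this, fejer_core]

lemma one_sub_cos_ge (t η : ℝ) (hη : 0 < η) (h : η ≤ nint t) :
    8*η^2 ≤ 1 - Real.cos (2*Real.pi*t) := by
  set s : ℝ := t - round t with hs
  have hns : nint t = |s| := rfl
  have hs2 : |s| ≤ 1/2 := abs_sub_round t
  have hsin0 : Real.sin ((round t : ℝ) * Real.pi) = 0 := Real.sin_int_mul_pi (round t)
  have hpyth := Real.sin_sq_add_cos_sq ((round t : ℝ) * Real.pi)
  have hadd : Real.sin (Real.pi * t)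
      = Real.sin (Real.pi * s) * Real.cos ((round t:ℝ) * Real.pi)
        + Real.cos (Real.pi * s) * Real.sin ((round t:ℝ) * Real.pi) := by
    rw [← Real.sin_add]; congr 1; rw [hs]; ring
  have hc2 : Real.cos ((round t:ℝ) * Real.pi)^2 = 1 := by
    rw [hsin0] at hpyth; linarith
  have hsq : Real.sin (Real.pi * t)^2 = Real.sin (Real.pi * s)^2 := by
    rw [hadd, hsin0, mul_zero, add_zero, mul_pow, hc2, mul_one]
  have hsinabs : 2*|s| ≤ Real.sin (Real.pi * |s|) := by
    have h0 : 0 ≤ Real.pi * |s| := by positivity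
    have h1 : Real.pi * |s| ≤ Real.pi / 2 := by
      nlinarith [Real.pi_pos]
    have := Real.mul_le_sin h0 h1
    have hpi : Real.pi ≠ 0 := Real.pi_ne_zero
    calc 2*|s| = 2/Real.pi * (Real.pi * |s|) := by field_simp
    _ ≤ Real.sin (Real.pi * |s|) := this
  have hsqabs : Real.sin (Real.pi * s)^2 = Real.sin (Real.pi * |s|)^2 := by
    rcases abs_choice s with h' | h'
    · rw [h']
    · rw [h', show Real.pi * -s = -(Real.pi * s) by ring, Real.sin_neg]
      ring
  have hcos2 : Real.cos (2*Real.pi*t) = 1 - 2 * Real.sin (Real.pi * t)^2 := by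
    have := Real.cos_two_mul (Real.pi * t)
    have hp := Real.sin_sq_add_cos_sq (Real.pi * t)
    rw [show 2*Real.pi*t = 2*(Real.pi*t) by ring, this]
    nlinarith
  have hηs : η ≤ |s| := by rw [← hns]; exact h
  have : 2*η ≤ Real.sin (Real.pi * |s|) := by linarith
  have hsin_nonneg : 0 ≤ Real.sin (Real.pi * |s|) := by linarith [abs_nonneg s, hη]
  nlinarith [hsq, hsqabs]

lemma fejer_bounds (K : ℕ) (hK : 0 < K) (t η : ℝ) (hη : 0 < η) (h : η ≤ nint t) :
    0 ≤ fejer K t ∧ fejer K t ≤ 1/(4*(K:ℝ)*η^2) := by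
  have e := fejer_mul K hK t
  have hc := one_sub_cos_ge t η hη h
  have h8 : (0:ℝ) < 8*η^2 := by positivity
  have hcpos : 0 < 1 - Real.cos (2*Real.pi*t) := lt_of_lt_of_le h8 hc
  have hKpos : (0:ℝ) < K := by exact_mod_cast hK
  have hub : 1 - Real.cos (2*Real.pi*(K:ℝ)*t) ≤ 2 := by
    nlinarith [Real.neg_one_le_cos (2*Real.pi*(K:ℝ)*t)]
  have hlb : 0 ≤ 1 - Real.cos (2*Real.pi*(K:ℝ)*t) := by
    nlinarith [Real.cos_le_one (2*Real.pi*(K:ℝ)*t)]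
  have hf0 : 0 ≤ fejer K t := by nlinarith [mul_pos hKpos hcpos]
  constructor
  · exact hf0
  · rw [le_div_iff₀ (by positivity)]
    nlinarith [mul_le_mul_of_nonneg_left hc hf0]

set_option maxHeartbeats 1600000 in
/-- If `V` is (Vaaler's) trigonometric polynomial satisfying
`|V(x) - s(x)| ≤ Δ_{D+1}(x)/(2D+2)` for all `x`, then the Selberg majorant
`S⁺_{D,η}(x) = 2η + V(x-η) + V(-x-η) + (Δ_{D+1}(x-η) + Δ_{D+1}(-x-η))/(2D+2)`
satisfies `|S⁺_{D,η}(x)| ≤ 1/(η²D²)` whenever `‖x‖ ≥ 2η` and `η ≤ 1/4`. -/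
theorem stmt_7 (D : ℕ) (hD : 1 ≤ D) (η : ℝ) (hη : 0 < η) (hη4 : η ≤ 1/4)
    (V : ℝ → ℝ) (hV : ∀ x, |V x - saw x| ≤ fejer (D+1) x / (2*(D : ℝ)+2)) :
    ∀ x : ℝ, 2*η ≤ nint x →
      |2*η + V (x - η) + V (-x - η) +
        (fejer (D+1) (x - η) + fejer (D+1) (-x - η)) / (2*(D : ℝ)+2)| ≤ 1/(η^2 * (D : ℝ)^2) := by
  intro x hx
  set a := x - η with ha
  set b := -x - η with hb
  have hηabs : |(-η)| = η := by rw [abs_neg, abs_of_pos hη]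
  -- nint a ≥ η
  have hna : η ≤ nint a := by
    have h1 := nint_shift x (-η)
    rw [hηabs] at h1
    have h2 : x + (-η) = a := by rw [ha]; ring
    rw [h2] at h1
    linarith
  have hnb : η ≤ nint b := by
    have h1 := nint_shift x η
    rw [abs_of_pos hη] at h1
    have h2 : nint b = nint (x + η) := by
      rw [hb, show -x - η = -(x + η) by ring, nint_neg]
    linarith
  -- fract computations
  have hu1 : 0 ≤ Int.fract a := Int.fract_nonneg a
  have hu : Int.fract a < 1 - 2*η := by
    by_contra hcon
    push_neg at hcon
    have hfl := Int.floor_add_fract a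
    have h1 : nint x ≤ |x - ((⌊a⌋ + 1 : ℤ):ℝ)| := nint_le _ _
    have h2 : |x - ((⌊a⌋ + 1:ℤ):ℝ)| ≤ η := by
      push_cast
      rw [abs_le]
      have hlt := Int.fract_lt_one a
      constructor <;> linarith [Int.fract_lt_one a]
    linarith
  have hfb : Int.fract b = 1 - Int.fract a - 2*η := by
    have hfl := Int.floor_add_fract a
    have h0 : b = ((-⌊a⌋ - 1 : ℤ):ℝ) + (1 - Int.fract a - 2*η) := by
      push_cast
      rw [hb]
      linarith [hfl, ha]
    rw [h0, Int.fract_intCast_add, Int.fract_eq_self.mpr ⟨by linarith, by linarith⟩]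
  -- saw values
  have hint : ∀ t : ℝ, η ≤ nint t → saw t = Int.fract t - 1/2 := by
    intro t ht
    rw [saw, if_neg]
    rintro ⟨k, hk⟩
    have : nint t = 0 := by rw [hk, nint, round_intCast]; simp
    linarith
  have hsa : saw a = Int.fract a - 1/2 := hint a hna
  have hsb : saw b = Int.fract b - 1/2 := hint b hnb
  have hsum : 2*η + saw a + saw b = 0 := by rw [hsa, hsb, hfb]; ring
  -- fejer bounds
  have hK : 0 < D + 1 := Nat.succ_pos D
  obtain ⟨hFa0, hFa⟩ := fejer_bounds (D+1) hK a η hη hna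
  obtain ⟨hFb0, hFb⟩ := fejer_bounds (D+1) hK b η hη hnb
  push_cast at hFa hFb
  set Fa := fejer (D+1) a
  set Fb := fejer (D+1) b
  have hVa := hV a
  have hVb := hV b
  have hD1 : (1:ℝ) ≤ (D:ℝ) := by exact_mod_cast hD
  have hden : (0:ℝ) < 2*(D:ℝ)+2 := by linarith
  -- rewrite the expression
  have key : 2*η + V a + V b + (Fa + Fb)/(2*(D:ℝ)+2)
      = (V a - saw a) + (V b - saw b) + (Fa + Fb)/(2*(D:ℝ)+2) + (2*η + saw a + saw b) := by
    ring
  have habs : |2*η + V a + V b + (Fa + Fb)/(2*(D:ℝ)+2)|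
      ≤ |V a - saw a| + |V b - saw b| + (Fa + Fb)/(2*(D:ℝ)+2) := by
    rw [key, hsum, add_zero]
    have t1 := abs_add_le ((V a - saw a) + (V b - saw b)) ((Fa + Fb)/(2*(D:ℝ)+2))
    have t2 := abs_add_le (V a - saw a) (V b - saw b)
    have t3 : |(Fa + Fb)/(2*(D:ℝ)+2)| = (Fa + Fb)/(2*(D:ℝ)+2) :=
      abs_of_nonneg (by positivity)
    linarith
  have hfin : |V a - saw a| + |V b - saw b| + (Fa + Fb)/(2*(D:ℝ)+2) ≤ 1/(η^2 * (D:ℝ)^2) := by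
    have h1 : |V a - saw a| + |V b - saw b| + (Fa + Fb)/(2*(D:ℝ)+2)
        ≤ 2*(Fa + Fb)/(2*(D:ℝ)+2) := by
      have : Fa/(2*(D:ℝ)+2) + Fb/(2*(D:ℝ)+2) + (Fa + Fb)/(2*(D:ℝ)+2)
          = 2*(Fa + Fb)/(2*(D:ℝ)+2) := by ring
      linarith
    have h2 : 2*(Fa + Fb)/(2*(D:ℝ)+2) ≤ 1/(η^2 * (D:ℝ)^2) := by
      rw [div_le_div_iff₀ hden (by positivity)]
      have hFa' : Fa * (4*((D:ℝ)+1)*η^2) ≤ 1 := by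
        rw [← le_div_iff₀ (by positivity)]; exact hFa
      have hFb' : Fb * (4*((D:ℝ)+1)*η^2) ≤ 1 := by
        rw [← le_div_iff₀ (by positivity)]; exact hFb
      have hA : Fa * (4*((D:ℝ)+1)*η^2) * (D:ℝ)^2 ≤ 1 * (D:ℝ)^2 :=
        mul_le_mul_of_nonneg_right hFa' (sq_nonneg _)
      have hB : Fb * (4*((D:ℝ)+1)*η^2) * (D:ℝ)^2 ≤ 1 * (D:ℝ)^2 :=
        mul_le_mul_of_nonneg_right hFb' (sq_nonneg _)
      have hC : 2*(Fa+Fb)*(η^2*(D:ℝ)^2) * (2*((D:ℝ)+1))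
          ≤ 1*(2*(D:ℝ)+2) * (2*((D:ℝ)+1)) := by
        have he : 2*(Fa+Fb)*(η^2*(D:ℝ)^2) * (2*((D:ℝ)+1))
            = Fa * (4*((D:ℝ)+1)*η^2) * (D:ℝ)^2 + Fb * (4*((D:ℝ)+1)*η^2) * (D:ℝ)^2 := by ring
        have hq : 2*(D:ℝ)^2 ≤ 1*(2*(D:ℝ)+2) * (2*((D:ℝ)+1)) := by nlinarith [hD1]
        linarith
      exact le_of_mul_le_mul_right hC (by positivity)
    linarith
  calc |2*η + V a + V b + (Fa + Fb)/(2*(D:ℝ)+2)|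
      ≤ |V a - saw a| + |V b - saw b| + (Fa + Fb)/(2*(D:ℝ)+2) := habs
    _ ≤ 1/(η^2 * (D:ℝ)^2) := hfin
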